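/- In the super-popularity reduction, if M is a popular matching of I that excludes edge (x,y) and covers vertex t, then M ∪ {(x,d_x), (t',d_t)} is a super-popular matching of I'. -/

import Mathlib

open Finset
open scoped Classical
noncomputable section

/-- A bipartite preference instance: bipartite (multi)graph `G=(U,W;E)` where each
edge `e` has endpoints `src e ∈ U`, `dst e ∈ W`, and every vertex has a preference
valuation over edges (only values on incident edges are relevant); the valuation of
being unmatched (`∅`) is `0`. -/
structure PrefInst (U W E : Type) where
  src : E → U
  dst : E → W
  pU : U → E → ℝ
  pW : W → E → ℝ

namespace PrefInst

variable {U W E : Type} [DecidableEq U] [DecidableEq W] [DecidableEq E]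

/-- `M` is a matching: no two distinct edges of `M` share an endpoint. -/
def IsMatching (I : PrefInst U W E) (M : Finset E) : Prop :=
  ∀ e ∈ M, ∀ f ∈ M, e ≠ f → I.src e ≠ I.src f ∧ I.dst e ≠ I.dst f

/-- The edge of `M` incident to `u ∈ U` (if any): `M(u)`. -/
def mU (I : PrefInst U W E) (M : Finset E) (u : U) : Option E :=
  (M.filter fun e => I.src e = u).toList.head?

/-- The edge of `M` incident to `w ∈ W` (if any): `M(w)`. -/
def mW (I : PrefInst U W E) (M : Finset E) (w : W) : Option E :=
  (M.filter fun e => I.dst e = w).toList.head?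

/-- Valuation by `u` of a possible partner edge, with `p_u(∅) = 0`. -/
def valU (I : PrefInst U W E) (u : U) : Option E → ℝ
  | none => 0
  | some e => I.pU u e

def valW (I : PrefInst U W E) (w : W) : Option E → ℝ
  | none => 0
  | some e => I.pW w e

/-- `M` is maximal: no edge can be added keeping it a matching. -/
def Maximal (I : PrefInst U W E) (M : Finset E) : Prop :=
  ∀ e ∉ M, ¬ I.IsMatching (insert e M)

/-- Edge `e ∉ M` blocks `M` in the weak-stability sense: both endpoints strictly improve. -/
def Blocks (I : PrefInst U W E) (M : Finset E) (e : E) : Prop :=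
  e ∉ M ∧ I.valU (I.src e) (I.mU M (I.src e)) < I.pU (I.src e) e ∧
    I.valW (I.dst e) (I.mW M (I.dst e)) < I.pW (I.dst e) e

/-- Weak stability: no blocking edge. -/
def WeaklyStable (I : PrefInst U W E) (M : Finset E) : Prop :=
  ∀ e, ¬ I.Blocks M e

/-- Edge `e ∉ M` γ-min blocks `M`: both endpoints improve by at least their γ-threshold. -/
def GBlocks (I : PrefInst U W E) (γU γW : E → ℝ) (M : Finset E) (e : E) : Prop :=
  e ∉ M ∧ I.valU (I.src e) (I.mU M (I.src e)) + γU e ≤ I.pU (I.src e) e ∧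
    I.valW (I.dst e) (I.mW M (I.dst e)) + γW e ≤ I.pW (I.dst e) e

/-- γ-min stability: no γ-min blocking edge. -/
def GMinStable (I : PrefInst U W E) (γU γW : E → ℝ) (M : Finset E) : Prop :=
  ∀ e, ¬ I.GBlocks γU γW M e

/-- Standard vote of `u` comparing `M` to `N`: `+1` if strictly better in `M`,
`-1` if strictly better in `N`, `0` on equal value. -/
def sVoteU (I : PrefInst U W E) (M N : Finset E) (u : U) : ℤ :=
  if I.valU u (I.mU M u) = I.valU u (I.mU N u) then 0
  else if I.valU u (I.mU M u) < I.valU u (I.mU N u) then -1 else 1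

def sVoteW (I : PrefInst U W E) (M N : Finset E) (w : W) : ℤ :=
  if I.valW w (I.mW M w) = I.valW w (I.mW N w) then 0
  else if I.valW w (I.mW M w) < I.valW w (I.mW N w) then -1 else 1

/-- Weak vote of `u`: `0` if same partner, `-1` on strict improvement in `N`,
`+1` otherwise (partner changed without strict improvement). -/
def wVoteU (I : PrefInst U W E) (M N : Finset E) (u : U) : ℤ :=
  if I.mU M u = I.mU N u then 0
  else if I.valU u (I.mU M u) < I.valU u (I.mU N u) then -1 else 1

def wVoteW (I : PrefInst U W E) (M N : Finset E) (w : W) : ℤ :=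
  if I.mW M w = I.mW N w then 0
  else if I.valW w (I.mW M w) < I.valW w (I.mW N w) then -1 else 1

/-- Super vote of `u`: `0` if same partner, `-1` if the new partner is weakly
preferred (and different), `+1` only on strict worsening. -/
def supVoteU (I : PrefInst U W E) (M N : Finset E) (u : U) : ℤ :=
  if I.mU M u = I.mU N u then 0
  else if I.valU u (I.mU M u) ≤ I.valU u (I.mU N u) then -1 else 1

def supVoteW (I : PrefInst U W E) (M N : Finset E) (w : W) : ℤ :=
  if I.mW M w = I.mW N w then 0
  else if I.valW w (I.mW M w) ≤ I.valW w (I.mW N w) then -1 else 1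

/-- γ-vote of `u`: `0` if same partner; `-1` if `p_u(N(u)) ≥ p_u(M(u)) + γ_{N(u)}^u`;
`+1` otherwise (partner changed without a γ-sized improvement). -/
def gVoteU (I : PrefInst U W E) (γU : E → ℝ) (M N : Finset E) (u : U) : ℤ :=
  if I.mU M u = I.mU N u then 0
  else match I.mU N u with
    | none => 1
    | some e => if I.valU u (I.mU M u) + γU e ≤ I.pU u e then -1 else 1

def gVoteW (I : PrefInst U W E) (γW : E → ℝ) (M N : Finset E) (w : W) : ℤ :=
  if I.mW M w = I.mW N w then 0
  else match I.mW N w with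
    | none => 1
    | some e => if I.valW w (I.mW M w) + γW e ≤ I.pW w e then -1 else 1

variable [Fintype U] [Fintype W]

/-- Popularity (standard votes): `M` never loses a head-to-head comparison. -/
def Popular (I : PrefInst U W E) (M : Finset E) : Prop :=
  ∀ N, I.IsMatching N → 0 ≤ (∑ u, I.sVoteU M N u) + ∑ w, I.sVoteW M N w

/-- Weak popularity. -/
def WeaklyPopular (I : PrefInst U W E) (M : Finset E) : Prop :=
  ∀ N, I.IsMatching N → 0 ≤ (∑ u, I.wVoteU M N u) + ∑ w, I.wVoteW M N w

/-- Super popularity. -/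
def SuperPopular (I : PrefInst U W E) (M : Finset E) : Prop :=
  ∀ N, I.IsMatching N → 0 ≤ (∑ u, I.supVoteU M N u) + ∑ w, I.supVoteW M N w

/-- γ-popularity. -/
def GammaPopular (I : PrefInst U W E) (γU γW : E → ℝ) (M : Finset E) : Prop :=
  ∀ N, I.IsMatching N → 0 ≤ (∑ u, I.gVoteU γU M N u) + ∑ w, I.gVoteW γW M N w

end PrefInst
end

namespace PrefInst

variable {U W E : Type} [DecidableEq U] [DecidableEq W] [DecidableEq E]

/-- The super-popularity reduction instance `I'` built from a strict-preference
instance `I` with designated leaf `x ∈ U` (whose unique edge is `exy`, towards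
`y = dst exy`) and forced vertex `t ∈ U`.  New U-side agents: `x' = inr 0`,
`t' = inr 1`; new W-side agents: `d_x = inr 0`, `d_t = inr 1`; new edges:
`inr 0 = (x,d_x)`, `inr 1 = (x',d_x)`, `inr 2 = (t,d_t)`, `inr 3 = (t',d_t)`.
`d_x` prefers `x ≻ x'`; `d_t` has the tie `t ∼ t'`; `d_t` is appended to the end
of `t`'s list (encoded by shifting `t`'s original values up by `1` and valuing
`d_t` at `1/2`), and the entry `y` in `x`'s list becomes the tie `d_x ∼ y`. -/
noncomputable def superRed (I : PrefInst U W E) (x t : U) (exy : E) :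
    PrefInst (U ⊕ Fin 2) (W ⊕ Fin 2) (E ⊕ Fin 4) where
  src := Sum.elim (fun e => Sum.inl (I.src e))
    ![Sum.inl x, Sum.inr 0, Sum.inl t, Sum.inr 1]
  dst := Sum.elim (fun e => Sum.inl (I.dst e))
    ![Sum.inr 0, Sum.inr 0, Sum.inr 1, Sum.inr 1]
  pU := fun v d =>
    match v, d with
    | Sum.inl u, Sum.inl e => if u = t then I.pU u e + 1 else I.pU u e
    | Sum.inl u, Sum.inr j =>
        if j = 0 ∧ u = x then I.pU x exy
        else if j = 2 ∧ u = t then 1 / 2 else 0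
    | Sum.inr i, Sum.inr j =>
        if i = 0 ∧ j = 1 then 1 else if i = 1 ∧ j = 3 then 1 else 0
    | Sum.inr _, Sum.inl _ => 0
  pW := fun v d =>
    match v, d with
    | Sum.inl w, Sum.inl e => I.pW w e
    | Sum.inl _, Sum.inr _ => 0
    | Sum.inr i, Sum.inr j =>
        if i = 0 ∧ j = 0 then 2
        else if i = 0 ∧ j = 1 then 1
        else if i = 1 ∧ (j = 2 ∨ j = 3) then 1 else 0
    | Sum.inr _, Sum.inl _ => 0

end PrefInst

/-!
Write `M' = M ∪ {(x,d_x), (t',d_t)}`, let `N'` be a matching of the reduced instance and `N` its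
restriction to the original edges. With strict preferences equal valuations mean equal partners,
so a super vote dominates a standard vote, and every original vertex other than `x` and `t` sees
the same partners in `(M', N')` as in `(M, N)`. The leaf `x` is unmatched in `M`, so its standard
vote is `-1` if `N` uses `(x,y)` and `0` otherwise, in which case `x` keeps `d_x` or strictly
loses. Since `t` is matched in `M` and `d_t` is last on its list, moving `t` to `d_t` is a strict
loss. The gadget pairs `x', d_x` and `t', d_t` cast a nonnegative total, so the super-vote margin
of `M'` over `N'` is at least the popularity margin of `M` over `N`, which is nonnegative.
-/

namespace PrefInst

open Sum

variable {U W E : Type} {I : PrefInst U W E} {M N : Finset E}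

theorem mU_eq_none_iff [DecidableEq U] {u : U} : I.mU M u = none ↔ ∀ e ∈ M, I.src e ≠ u := by
  simp [mU, Finset.filter_eq_empty_iff]

theorem mW_eq_none_iff [DecidableEq W] {w : W} : I.mW M w = none ↔ ∀ e ∈ M, I.dst e ≠ w := by
  simp [mW, Finset.filter_eq_empty_iff]

theorem mem_of_mU_eq_some [DecidableEq U] {u : U} {e : E} (h : I.mU M u = some e) :
    e ∈ M ∧ I.src e = u := by
  simpa using List.mem_of_mem_head? h

theorem mem_of_mW_eq_some [DecidableEq W] {w : W} {e : E} (h : I.mW M w = some e) :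
    e ∈ M ∧ I.dst e = w := by
  simpa using List.mem_of_mem_head? h

theorem IsMatching.mU_eq_some [DecidableEq U] (hM : I.IsMatching M) {u : U} {e : E} (he : e ∈ M)
    (hu : I.src e = u) : I.mU M u = some e := by
  have : M.filter (fun f => I.src f = u) = {e} := by
    refine Finset.eq_singleton_iff_unique_mem.2 ⟨by simp [he, hu], fun f hf => ?_⟩
    rw [Finset.mem_filter] at hf
    by_contra hfe
    exact (hM f hf.1 e he hfe).1 (hf.2.trans hu.symm)
  simp [mU, this]

theorem IsMatching.mW_eq_some [DecidableEq W] (hM : I.IsMatching M) {w : W} {e : E} (he : e ∈ M)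
    (hw : I.dst e = w) : I.mW M w = some e := by
  have : M.filter (fun f => I.dst f = w) = {e} := by
    refine Finset.eq_singleton_iff_unique_mem.2 ⟨by simp [he, hw], fun f hf => ?_⟩
    rw [Finset.mem_filter] at hf
    by_contra hfe
    exact (hM f hf.1 e he hfe).2 (hf.2.trans hw.symm)
  simp [mW, this]

theorem mU_eq_ite_of_src_eq_iff [DecidableEq U] [DecidableEq E] {u : U} {e₀ : E}
    (h : ∀ e, I.src e = u ↔ e = e₀) : I.mU M u = if e₀ ∈ M then some e₀ else none := by
  simp_rw [mU, h, Finset.filter_eq']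
  split_ifs <;> simp

theorem sVoteU_le_one [DecidableEq U] {u : U} : I.sVoteU M N u ≤ 1 := by
  unfold sVoteU; split_ifs <;> norm_num

theorem neg_one_le_supVoteU [DecidableEq U] [DecidableEq E] {u : U} : -1 ≤ I.supVoteU M N u := by
  unfold supVoteU; split_ifs <;> norm_num

theorem neg_one_le_supVoteW [DecidableEq W] [DecidableEq E] {w : W} : -1 ≤ I.supVoteW M N w := by
  unfold supVoteW; split_ifs <;> norm_num

theorem sVoteU_le_supVoteU [DecidableEq U] [DecidableEq E] {u : U}
    (h : I.valU u (I.mU M u) = I.valU u (I.mU N u) → I.mU M u = I.mU N u) :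
    I.sVoteU M N u ≤ I.supVoteU M N u := by
  unfold sVoteU supVoteU
  split_ifs <;> grind

theorem sVoteW_le_supVoteW [DecidableEq W] [DecidableEq E] {w : W}
    (h : I.valW w (I.mW M w) = I.valW w (I.mW N w) → I.mW M w = I.mW N w) :
    I.sVoteW M N w ≤ I.supVoteW M N w := by
  unfold sVoteW supVoteW
  split_ifs <;> grind

theorem mU_eq_of_valU_eq [DecidableEq U] {u : U} (hpos : ∀ e, 0 < I.pU u e)
    (hstrict : ∀ e f, I.src e = u → I.src f = u → I.pU u e = I.pU u f → e = f)
    (h : I.valU u (I.mU M u) = I.valU u (I.mU N u)) : I.mU M u = I.mU N u := by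
  rcases hM : I.mU M u with _ | e <;> rcases hN : I.mU N u with _ | f <;>
    simp only [hM, hN, valU] at h
  · rfl
  · exact absurd h (hpos f).ne
  · exact absurd h (hpos e).ne'
  · rw [hstrict e f (mem_of_mU_eq_some hM).2 (mem_of_mU_eq_some hN).2 h]

theorem mW_eq_of_valW_eq [DecidableEq W] {w : W} (hpos : ∀ e, 0 < I.pW w e)
    (hstrict : ∀ e f, I.dst e = w → I.dst f = w → I.pW w e = I.pW w f → e = f)
    (h : I.valW w (I.mW M w) = I.valW w (I.mW N w)) : I.mW M w = I.mW N w := by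
  rcases hM : I.mW M w with _ | e <;> rcases hN : I.mW N w with _ | f <;>
    simp only [hM, hN, valW] at h
  · rfl
  · exact absurd h (hpos f).ne
  · exact absurd h (hpos e).ne'
  · rw [hstrict e f (mem_of_mW_eq_some hM).2 (mem_of_mW_eq_some hN).2 h]

section Extension

variable {U₂ W₂ E₂ : Type} {J : PrefInst (U ⊕ U₂) (W ⊕ W₂) (E ⊕ E₂)}

structure Extends (J : PrefInst (U ⊕ U₂) (W ⊕ W₂) (E ⊕ E₂)) (I : PrefInst U W E) : Prop where
  src_inl : ∀ e, J.src (inl e) = inl (I.src e)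
  dst_inl : ∀ e, J.dst (inl e) = inl (I.dst e)

theorem IsMatching.toLeft (hJ : J.Extends I) {N' : Finset (E ⊕ E₂)} (hN' : J.IsMatching N') :
    I.IsMatching N'.toLeft := by
  intro e he f hf hef
  rw [Finset.mem_toLeft] at he hf
  have h := hN' _ he _ hf (by simpa using hef)
  rw [hJ.src_inl, hJ.src_inl, hJ.dst_inl, hJ.dst_inl] at h
  exact ⟨fun h' => h.1 (by rw [h']), fun h' => h.2 (by rw [h'])⟩

theorem Extends.mU_inl [DecidableEq U] [DecidableEq U₂] (hJ : J.Extends I)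
    {N' : Finset (E ⊕ E₂)} (hN' : J.IsMatching N') {u : U}
    (hu : ∀ e' ∈ N', J.src e' = inl u → e'.isLeft) :
    J.mU N' (inl u) = (I.mU N'.toLeft u).map inl := by
  rcases h : I.mU N'.toLeft u with _ | e
  · rw [Option.map_none, mU_eq_none_iff]
    rw [mU_eq_none_iff] at h
    rintro (e | e) he hsrc
    · exact h e (Finset.mem_toLeft.2 he) (inl_injective (hJ.src_inl e ▸ hsrc))
    · simpa using hu _ he hsrc
  · obtain ⟨he, hsrc⟩ := mem_of_mU_eq_some h
    exact hN'.mU_eq_some (Finset.mem_toLeft.1 he) (by rw [hJ.src_inl, hsrc])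

theorem Extends.mW_inl [DecidableEq W] [DecidableEq W₂] (hJ : J.Extends I)
    {N' : Finset (E ⊕ E₂)} (hN' : J.IsMatching N') {w : W}
    (hw : ∀ e' ∈ N', J.dst e' = inl w → e'.isLeft) :
    J.mW N' (inl w) = (I.mW N'.toLeft w).map inl := by
  rcases h : I.mW N'.toLeft w with _ | e
  · rw [Option.map_none, mW_eq_none_iff]
    rw [mW_eq_none_iff] at h
    rintro (e | e) he hdst
    · exact h e (Finset.mem_toLeft.2 he) (inl_injective (hJ.dst_inl e ▸ hdst))
    · simpa using hw _ he hdst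
  · obtain ⟨he, hdst⟩ := mem_of_mW_eq_some h
    exact hN'.mW_eq_some (Finset.mem_toLeft.1 he) (by rw [hJ.dst_inl, hdst])

theorem supVoteU_inl_eq [DecidableEq U] [DecidableEq U₂] [DecidableEq E] [DecidableEq E₂]
    {M' N' : Finset (E ⊕ E₂)} {u : U}
    (hM : J.mU M' (inl u) = (I.mU M u).map inl) (hN : J.mU N' (inl u) = (I.mU N u).map inl)
    (hval : ∀ o₁ o₂ : Option E,
      J.valU (inl u) (o₁.map inl) ≤ J.valU (inl u) (o₂.map inl) ↔ I.valU u o₁ ≤ I.valU u o₂) :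
    J.supVoteU M' N' (inl u) = I.supVoteU M N u := by
  simp only [supVoteU, hM, hN, hval, (Option.map_injective inl_injective).eq_iff]

theorem supVoteW_inl_eq [DecidableEq W] [DecidableEq W₂] [DecidableEq E] [DecidableEq E₂]
    {M' N' : Finset (E ⊕ E₂)} {w : W}
    (hM : J.mW M' (inl w) = (I.mW M w).map inl) (hN : J.mW N' (inl w) = (I.mW N w).map inl)
    (hval : ∀ o : Option E, J.valW (inl w) (o.map inl) = I.valW w o) :
    J.supVoteW M' N' (inl w) = I.supVoteW M N w := by
  simp only [supVoteW, hM, hN, hval, (Option.map_injective inl_injective).eq_iff]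

end Extension

section SuperRed

variable [DecidableEq U] {x t : U} {exy : E}

theorem superRed_extends : (I.superRed x t exy).Extends I := ⟨fun _ => rfl, fun _ => rfl⟩

theorem superRed_src_eq_inl {e' : E ⊕ Fin 4} {u : U} (h : (I.superRed x t exy).src e' = inl u) :
    e'.isLeft ∨ (e' = inr 0 ∧ u = x) ∨ (e' = inr 2 ∧ u = t) := by
  rcases e' with e | j
  · simp
  · fin_cases j <;> simp_all [superRed, eq_comm]

theorem superRed_src_eq_inr_zero {e' : E ⊕ Fin 4} :
    (I.superRed x t exy).src e' = inr 0 ↔ e' = inr 1 := by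
  rcases e' with e | j
  · simp [superRed]
  · fin_cases j <;> simp [superRed]

theorem superRed_src_eq_inr_one {e' : E ⊕ Fin 4} :
    (I.superRed x t exy).src e' = inr 1 ↔ e' = inr 3 := by
  rcases e' with e | j
  · simp [superRed]
  · fin_cases j <;> simp [superRed]

theorem superRed_dst_eq_inl {e' : E ⊕ Fin 4} {w : W} (h : (I.superRed x t exy).dst e' = inl w) :
    e'.isLeft := by
  rcases e' with e | j
  · simp
  · fin_cases j <;> simp [superRed] at h

theorem superRed_dst_eq_inr_zero {e' : E ⊕ Fin 4} :
    (I.superRed x t exy).dst e' = inr 0 ↔ e' = inr 0 ∨ e' = inr 1 := by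
  rcases e' with e | j
  · simp [superRed]
  · fin_cases j <;> simp [superRed]

@[simp] theorem superRed_pU_x_dx : (I.superRed x t exy).pU (inl x) (inr 0) = I.pU x exy := by
  simp [superRed]

@[simp] theorem superRed_pU_t_dt : (I.superRed x t exy).pU (inl t) (inr 2) = 1 / 2 := by
  simp [superRed]

@[simp] theorem superRed_pU_x'_dx : (I.superRed x t exy).pU (inr 0) (inr 1) = 1 := by
  simp [superRed]

@[simp] theorem superRed_pU_t'_dt : (I.superRed x t exy).pU (inr 1) (inr 3) = 1 := by
  simp [superRed]

@[simp] theorem superRed_pW_dx_x : (I.superRed x t exy).pW (inr 0) (inr 0) = 2 := by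
  simp [superRed]

@[simp] theorem superRed_pW_dx_x' : (I.superRed x t exy).pW (inr 0) (inr 1) = 1 := by
  simp [superRed]

@[simp] theorem superRed_pU_inl_inl {u : U} {e : E} :
    (I.superRed x t exy).pU (inl u) (inl e) = if u = t then I.pU u e + 1 else I.pU u e := rfl

theorem superRed_valU_inl_map_le_iff {u : U} (hpos : ∀ e, 0 < I.pU u e) (o₁ o₂ : Option E) :
    (I.superRed x t exy).valU (inl u) (o₁.map inl) ≤
        (I.superRed x t exy).valU (inl u) (o₂.map inl) ↔ I.valU u o₁ ≤ I.valU u o₂ := by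
  rcases o₁ with _ | e₁ <;> rcases o₂ with _ | e₂ <;>
    simp only [Option.map_none, Option.map_some, valU, superRed_pU_inl_inl] <;> split_ifs <;>
    simp [(hpos _).le, (hpos _).not_ge, add_pos (hpos _) one_pos, (add_pos (hpos _) one_pos).le]

/-- The matching `M ∪ {(x,d_x), (t',d_t)}` of the reduced instance. -/
def liftMatching [DecidableEq E] (M : Finset E) : Finset (E ⊕ Fin 4) := M.image inl ∪ {inr 0, inr 3}

theorem toLeft_liftMatching [DecidableEq E] : (liftMatching M).toLeft = M := by
  ext e; simp [liftMatching]

theorem isMatching_liftMatching [DecidableEq E] (hM : I.IsMatching M) (hMx : ∀ e ∈ M, I.src e ≠ x) :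
    (I.superRed x t exy).IsMatching (liftMatching M) := by
  intro f hf g hg hfg
  simp only [liftMatching, Finset.mem_union, Finset.mem_image, Finset.mem_insert,
    Finset.mem_singleton] at hf hg
  rcases hf with ⟨e, he, rfl⟩ | rfl | rfl <;> rcases hg with ⟨e', he', rfl⟩ | rfl | rfl
  · simpa [superRed] using hM e he e' he' (fun h => hfg (h ▸ rfl))
  all_goals simp_all [superRed, eq_comm (a := x)]

theorem mU_liftMatching_inl [DecidableEq E] (hM : I.IsMatching M) (hMx : ∀ e ∈ M, I.src e ≠ x)
    {u : U} (hux : u ≠ x) :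
    (I.superRed x t exy).mU (liftMatching M) (inl u) = (I.mU M u).map inl := by
  rw [superRed_extends.mU_inl (isMatching_liftMatching hM hMx), toLeft_liftMatching]
  intro e' he' hsrc
  rcases superRed_src_eq_inl hsrc with h | ⟨rfl, rfl⟩ | ⟨rfl, -⟩
  · exact h
  · exact absurd rfl hux
  · simp [liftMatching] at he'

theorem mW_liftMatching_inl [DecidableEq W] [DecidableEq E] (hM : I.IsMatching M)
    (hMx : ∀ e ∈ M, I.src e ≠ x) (w : W) :
    (I.superRed x t exy).mW (liftMatching M) (inl w) = (I.mW M w).map inl := by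
  rw [superRed_extends.mW_inl (isMatching_liftMatching hM hMx) fun _ _ h => superRed_dst_eq_inl h,
    toLeft_liftMatching]

theorem superRed_supVoteU_inl [DecidableEq E] {u : U} (hpos : ∀ e, 0 < I.pU u e)
    (hM : I.IsMatching M) (hMx : ∀ e ∈ M, I.src e ≠ x) {N' : Finset (E ⊕ Fin 4)}
    (hN' : (I.superRed x t exy).IsMatching N') (hux : u ≠ x) (hut : inr 2 ∈ N' → u ≠ t) :
    (I.superRed x t exy).supVoteU (liftMatching M) N' (inl u) = I.supVoteU M N'.toLeft u := by
  refine supVoteU_inl_eq (mU_liftMatching_inl hM hMx hux) (superRed_extends.mU_inl hN' ?_)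
    (superRed_valU_inl_map_le_iff hpos)
  intro e' he' hsrc
  rcases superRed_src_eq_inl hsrc with h | ⟨rfl, rfl⟩ | ⟨rfl, rfl⟩
  · exact h
  · exact absurd rfl hux
  · exact absurd rfl (hut he')

theorem superRed_supVoteW_inl [DecidableEq W] [DecidableEq E] (hM : I.IsMatching M)
    (hMx : ∀ e ∈ M, I.src e ≠ x) {N' : Finset (E ⊕ Fin 4)}
    (hN' : (I.superRed x t exy).IsMatching N') (w : W) :
    (I.superRed x t exy).supVoteW (liftMatching M) N' (inl w) = I.supVoteW M N'.toLeft w :=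
  supVoteW_inl_eq (mW_liftMatching_inl hM hMx w)
    (superRed_extends.mW_inl hN' fun _ _ h => superRed_dst_eq_inl h) (by rintro (_ | _) <;> rfl)

theorem sVoteU_le_superRed_supVoteU_leaf [DecidableEq E] (hpos : 0 < I.pU x exy) (hxt : x ≠ t)
    (hx : I.src exy = x) (hleaf : ∀ e, I.src e = x → e = exy) (hM : I.IsMatching M)
    (hMx : ∀ e ∈ M, I.src e ≠ x) {N' : Finset (E ⊕ Fin 4)}
    (hN' : (I.superRed x t exy).IsMatching N') :
    I.sVoteU M N'.toLeft x ≤ (I.superRed x t exy).supVoteU (liftMatching M) N' (inl x) := by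
  have hMx' : I.mU M x = none := mU_eq_none_iff.2 hMx
  have hM'x : (I.superRed x t exy).mU (liftMatching M) (inl x) = some (inr 0) :=
    (isMatching_liftMatching hM hMx).mU_eq_some (by simp [liftMatching]) rfl
  by_cases hexy : inl exy ∈ N'
  · have hNx : I.mU N'.toLeft x = some exy :=
      (hN'.toLeft superRed_extends).mU_eq_some (Finset.mem_toLeft.2 hexy) hx
    calc I.sVoteU M N'.toLeft x = -1 := by simp [sVoteU, hMx', hNx, valU, hpos, hpos.ne]
      _ ≤ _ := neg_one_le_supVoteU
  have hNx : I.mU N'.toLeft x = none :=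
    mU_eq_none_iff.2 fun e he hex => hexy (hleaf e hex ▸ Finset.mem_toLeft.1 he)
  rw [show I.sVoteU M N'.toLeft x = 0 by simp [sVoteU, hMx', hNx]]
  by_cases h0 : inr 0 ∈ N'
  · rw [supVoteU, hM'x, hN'.mU_eq_some (u := inl x) h0 rfl, if_pos rfl]
  have hN'x : (I.superRed x t exy).mU N' (inl x) = none := by
    refine mU_eq_none_iff.2 fun e' he' hsrc => ?_
    rcases superRed_src_eq_inl hsrc with h | ⟨rfl, -⟩ | ⟨rfl, h⟩
    · obtain ⟨e, rfl⟩ := isLeft_iff.1 h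
      exact hexy (hleaf e (inl_injective hsrc) ▸ he')
    · exact h0 he'
    · exact hxt h
  simp [supVoteU, hM'x, hN'x, valU, hpos.not_ge]

theorem superRed_supVoteU_inl_eq_one [DecidableEq E] (hpos : ∀ e, 0 < I.pU t e) (hxt : x ≠ t)
    (hM : I.IsMatching M) (hMx : ∀ e ∈ M, I.src e ≠ x) {et : E} (het : et ∈ M)
    (hett : I.src et = t) {N' : Finset (E ⊕ Fin 4)} (hN' : (I.superRed x t exy).IsMatching N')
    (h2 : inr 2 ∈ N') :
    (I.superRed x t exy).supVoteU (liftMatching M) N' (inl t) = 1 := by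
  have hMt : (I.superRed x t exy).mU (liftMatching M) (inl t) = some (inl et) := by
    rw [mU_liftMatching_inl hM hMx hxt.symm, hM.mU_eq_some het hett, Option.map_some]
  have : (2 : ℝ)⁻¹ < I.pU t et + 1 := by linarith [hpos et]
  simp [supVoteU, hMt, hN'.mU_eq_some (u := inl t) h2 rfl, valU, this]

theorem superRed_supVote_dx_nonneg [DecidableEq W] [DecidableEq E] (hM : I.IsMatching M)
    (hMx : ∀ e ∈ M, I.src e ≠ x) {N' : Finset (E ⊕ Fin 4)}
    (hN' : (I.superRed x t exy).IsMatching N') :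
    0 ≤ (I.superRed x t exy).supVoteU (liftMatching M) N' (inr 0) +
      (I.superRed x t exy).supVoteW (liftMatching M) N' (inr 0) := by
  have hM' := isMatching_liftMatching (t := t) (exy := exy) hM hMx
  have hxM : (I.superRed x t exy).mU (liftMatching M) (inr 0) = none := by
    rw [mU_eq_ite_of_src_eq_iff fun _ => superRed_src_eq_inr_zero]; simp [liftMatching]
  have hdM : (I.superRed x t exy).mW (liftMatching M) (inr 0) = some (inr 0) :=
    hM'.mW_eq_some (by simp [liftMatching]) rfl
  have hxN : (I.superRed x t exy).mU N' (inr 0) = if inr 1 ∈ N' then some (inr 1) else none :=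
    mU_eq_ite_of_src_eq_iff fun _ => superRed_src_eq_inr_zero
  by_cases h0 : inr 0 ∈ N'
  · have h1 : inr 1 ∉ N' := fun h1 => (hN' _ h0 _ h1 (by simp)).2 rfl
    simp [supVoteU, supVoteW, hxM, hdM, hxN, h1, hN'.mW_eq_some (w := inr 0) h0 rfl]
  by_cases h1 : inr 1 ∈ N'
  · simp [supVoteU, supVoteW, hxM, hdM, hxN, h1, hN'.mW_eq_some (w := inr 0) h1 rfl, valU, valW]
  have hdN : (I.superRed x t exy).mW N' (inr 0) = none := by
    refine mW_eq_none_iff.2 fun e' he' hdst => ?_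
    rcases superRed_dst_eq_inr_zero.1 hdst with rfl | rfl
    exacts [h0 he', h1 he']
  simp [supVoteU, supVoteW, hxM, hdM, hxN, h1, hdN, valW]
  norm_num

theorem superRed_supVote_dt_nonneg [DecidableEq W] [DecidableEq E] (hM : I.IsMatching M)
    (hMx : ∀ e ∈ M, I.src e ≠ x) {N' : Finset (E ⊕ Fin 4)}
    (hN' : (I.superRed x t exy).IsMatching N') :
    0 ≤ (I.superRed x t exy).supVoteU (liftMatching M) N' (inr 1) +
      (I.superRed x t exy).supVoteW (liftMatching M) N' (inr 1) := by
  have hM' := isMatching_liftMatching (t := t) (exy := exy) hM hMx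
  have ht'M : (I.superRed x t exy).mU (liftMatching M) (inr 1) = some (inr 3) :=
    hM'.mU_eq_some (by simp [liftMatching]) rfl
  have hdM : (I.superRed x t exy).mW (liftMatching M) (inr 1) = some (inr 3) :=
    hM'.mW_eq_some (by simp [liftMatching]) rfl
  have ht'N : (I.superRed x t exy).mU N' (inr 1) = if inr 3 ∈ N' then some (inr 3) else none :=
    mU_eq_ite_of_src_eq_iff fun _ => superRed_src_eq_inr_one
  by_cases h3 : inr 3 ∈ N'
  · simp [supVoteU, supVoteW, ht'M, hdM, ht'N, h3, hN'.mW_eq_some (w := inr 1) h3 rfl]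
  have : (I.superRed x t exy).supVoteU (liftMatching M) N' (inr 1) = 1 := by
    simp [supVoteU, ht'M, ht'N, h3, valU]
  rw [this, ← neg_le_iff_add_nonneg']
  exact neg_one_le_supVoteW

theorem sVoteU_le_superRed_supVoteU [DecidableEq E] (hpU : ∀ u e, 0 < I.pU u e)
    (hstrictU : ∀ u e f, I.src e = u → I.src f = u → I.pU u e = I.pU u f → e = f)
    (hxt : x ≠ t) (hx : I.src exy = x) (hleaf : ∀ e, I.src e = x → e = exy)
    (hM : I.IsMatching M) (hMx : ∀ e ∈ M, I.src e ≠ x) {et : E} (het : et ∈ M)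
    (hett : I.src et = t) {N' : Finset (E ⊕ Fin 4)} (hN' : (I.superRed x t exy).IsMatching N')
    (u : U) :
    I.sVoteU M N'.toLeft u ≤ (I.superRed x t exy).supVoteU (liftMatching M) N' (inl u) := by
  by_cases hux : u = x
  · rw [hux]
    exact sVoteU_le_superRed_supVoteU_leaf (hpU x exy) hxt hx hleaf hM hMx hN'
  by_cases ht : inr 2 ∈ N' ∧ u = t
  · obtain ⟨h2, rfl⟩ := ht
    exact sVoteU_le_one.trans (superRed_supVoteU_inl_eq_one (hpU u) hxt hM hMx het hett hN' h2).ge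
  rw [superRed_supVoteU_inl (hpU u) hM hMx hN' hux fun h2 hut => ht ⟨h2, hut⟩]
  exact sVoteU_le_supVoteU (mU_eq_of_valU_eq (hpU u) (hstrictU u))

theorem sVoteW_le_superRed_supVoteW [DecidableEq W] [DecidableEq E] (hpW : ∀ w e, 0 < I.pW w e)
    (hstrictW : ∀ w e f, I.dst e = w → I.dst f = w → I.pW w e = I.pW w f → e = f)
    (hM : I.IsMatching M) (hMx : ∀ e ∈ M, I.src e ≠ x) {N' : Finset (E ⊕ Fin 4)}
    (hN' : (I.superRed x t exy).IsMatching N') (w : W) :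
    I.sVoteW M N'.toLeft w ≤ (I.superRed x t exy).supVoteW (liftMatching M) N' (inl w) := by
  rw [superRed_supVoteW_inl hM hMx hN' w]
  exact sVoteW_le_supVoteW (mW_eq_of_valW_eq (hpW w) (hstrictW w))

end SuperRed

end PrefInst

open PrefInst in
theorem superRed_popular_gives_super_popular_general
    {U W E : Type} [DecidableEq U] [DecidableEq W] [DecidableEq E]
    [Fintype U] [Fintype W]
    (I : PrefInst U W E)
    -- strict preferences, all edges acceptable (unmatched is strictly worst)
    (hpU : ∀ u e, 0 < I.pU u e) (hpW : ∀ w e, 0 < I.pW w e)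
    (hstrictU : ∀ u e f, I.src e = u → I.src f = u → I.pU u e = I.pU u f → e = f)
    (hstrictW : ∀ w e f, I.dst e = w → I.dst f = w → I.pW w e = I.pW w f → e = f)
    (x t : U) (exy : E)
    (hxt : x ≠ t)
    -- x is a leaf whose unique edge is exy = (x,y), y = I.dst exy
    (hx : I.src exy = x) (hleaf : ∀ e, I.src e = x → e = exy)
    (M : Finset E) (hM : I.IsMatching M) (hMpop : I.Popular M)
    (hexy : exy ∉ M) (hcov : ∃ e ∈ M, I.src e = t) :
    (I.superRed x t exy).IsMatching
      (M.image Sum.inl ∪ {Sum.inr 0, Sum.inr 3}) ∧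
    (I.superRed x t exy).SuperPopular
      (M.image Sum.inl ∪ {Sum.inr 0, Sum.inr 3}) := by
  show (I.superRed x t exy).IsMatching (liftMatching M) ∧
    (I.superRed x t exy).SuperPopular (liftMatching M)
  obtain ⟨et, het, hett⟩ := hcov
  have hMx : ∀ e ∈ M, I.src e ≠ x := fun e he hex => hexy (hleaf e hex ▸ he)
  refine ⟨isMatching_liftMatching hM hMx, fun N' hN' => ?_⟩
  have hU := Finset.sum_le_sum fun u (_ : u ∈ Finset.univ) =>
    sVoteU_le_superRed_supVoteU hpU hstrictU hxt hx hleaf hM hMx het hett hN' u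
  have hW := Finset.sum_le_sum fun w (_ : w ∈ Finset.univ) =>
    sVoteW_le_superRed_supVoteW hpW hstrictW hM hMx hN' w
  have hpop := hMpop N'.toLeft (hN'.toLeft superRed_extends)
  rw [Fintype.sum_sum_type, Fintype.sum_sum_type, Fin.sum_univ_two, Fin.sum_univ_two]
  linarith [hU, hW, superRed_supVote_dx_nonneg hM hMx hN',
    superRed_supVote_dt_nonneg hM hMx hN']

open PrefInst in
/-- If `M` is a popular matching of `I` that excludes the edge
`(x,y)` and covers `t`, then `M ∪ {(x,d_x), (t',d_t)}` is a super-popular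
matching of the reduction instance `I'`. -/
theorem superRed_popular_gives_super_popular
    {U W E : Type} [DecidableEq U] [DecidableEq W] [DecidableEq E]
    [Fintype U] [Fintype W]
    (I : PrefInst U W E)
    -- strict preferences, all edges acceptable (unmatched is strictly worst)
    (hpU : ∀ u e, 0 < I.pU u e) (hpW : ∀ w e, 0 < I.pW w e)
    (hstrictU : ∀ u e f, I.src e = u → I.src f = u → I.pU u e = I.pU u f → e = f)
    (hstrictW : ∀ w e f, I.dst e = w → I.dst f = w → I.pW w e = I.pW w f → e = f)
    (x t : U) (exy : E) (z : U) (eyz : E)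
    (hxt : x ≠ t)
    -- x is a leaf whose unique edge is exy = (x,y), y = I.dst exy
    (hx : I.src exy = x) (hleaf : ∀ e, I.src e = x → e = exy)
    -- y's only other neighbour is z, and y,z are each other's first choices
    (hz : I.src eyz = z) (hy : I.dst eyz = I.dst exy) (hzx : z ≠ x)
    (honly : ∀ e, I.dst e = I.dst exy → e = exy ∨ I.src e = z)
    (hzfirst : ∀ e, I.src e = z → I.pU z e ≤ I.pU z eyz)
    (hyfirst : ∀ e, I.dst e = I.dst exy → I.pW (I.dst exy) e ≤ I.pW (I.dst exy) eyz)
    (M : Finset E) (hM : I.IsMatching M) (hMpop : I.Popular M)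
    (hexy : exy ∉ M) (hcov : ∃ e ∈ M, I.src e = t) :
    (I.superRed x t exy).IsMatching
      (M.image Sum.inl ∪ {Sum.inr 0, Sum.inr 3}) ∧
    (I.superRed x t exy).SuperPopular
      (M.image Sum.inl ∪ {Sum.inr 0, Sum.inr 3}) :=
  superRed_popular_gives_super_popular_general I hpU hpW hstrictU hstrictW x t exy hxt hx hleaf M hM
    hMpop hexy hcov
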